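/- arXiv:1609.06418 — 6 statements merged into one kernel-verified Lean document; each statement's English description precedes it below -/
import Mathlib

section
/- Let (Ω, F, P) be a probability space and A₁, …, A_k ∈ F. Let Δ(i) denote the event that exactly i of the events A₁,…,A_k occur. Then for l < k, the sum over all l-element subsets {i₁,…,i_l} of {1,…,k} of the indicator of A_{i₁} ∪ ⋯ ∪ A_{i_l} equals C(k,l) · Σ_{i=0}^{k-1} 1_{Δ(k−i)} − Σ_{i=l}^{k-1} C(i,l) · 1_{Δ(k−i)}. -/
open MeasureTheory Finset Classical

theorem union_indicator_combinatorial_identity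
    {Ω : Type*} (k : ℕ) (A : Fin k → Set Ω)
    (Δ : ℕ → Set Ω)
    (hΔ : ∀ i, Δ i = {ω | (Finset.univ.filter fun j => ω ∈ A j).card = i})
    (l : ℕ) (hl : l < k) (ω : Ω) :
    ∑ s ∈ Finset.powersetCard l (Finset.univ : Finset (Fin k)),
        (⋃ i ∈ s, A i).indicator (fun _ => (1 : ℝ)) ω
      = (k.choose l : ℝ) *
          ∑ i ∈ Finset.range k, (Δ (k - i)).indicator (fun _ => (1 : ℝ)) ω
        - ∑ i ∈ Finset.Ico l k,
            (i.choose l : ℝ) * (Δ (k - i)).indicator (fun _ => (1 : ℝ)) ω := by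
  classical
  set T : Finset (Fin k) := Finset.univ.filter fun j => ω ∈ A j with hT
  set m := T.card with hm
  have hmk : m ≤ k := by
    have := Finset.card_le_univ T
    simpa [hm] using this
  have hΔind : ∀ i, (Δ i).indicator (fun _ => (1 : ℝ)) ω = if m = i then 1 else 0 := by
    intro i
    rw [hΔ]
    by_cases h : m = i <;> simp [Set.indicator_apply, hm, hT, h]
  -- LHS
  have hUind : ∀ s : Finset (Fin k),
      (⋃ i ∈ s, A i).indicator (fun _ => (1 : ℝ)) ω = if s ⊆ Tᶜ then 0 else 1 := by
    intro s
    have : (ω ∈ ⋃ i ∈ s, A i) ↔ ¬ s ⊆ Tᶜ := by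
      simp [Set.mem_iUnion, hT, Finset.subset_iff, not_forall]
    by_cases h : s ⊆ Tᶜ <;> simp [Set.indicator_apply, this, h]
  have hTc : Tᶜ.card = k - m := by
    simp [Finset.card_compl, hm]
  have hLHS : ∑ s ∈ Finset.powersetCard l (Finset.univ : Finset (Fin k)),
      (⋃ i ∈ s, A i).indicator (fun _ => (1 : ℝ)) ω
      = (k.choose l : ℝ) - ((k - m).choose l : ℝ) := by
    calc ∑ s ∈ Finset.powersetCard l (Finset.univ : Finset (Fin k)),
        (⋃ i ∈ s, A i).indicator (fun _ => (1 : ℝ)) ω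
        = ∑ s ∈ Finset.powersetCard l (Finset.univ : Finset (Fin k)),
            ((1 : ℝ) - if s ⊆ Tᶜ then 1 else 0) := by
          apply Finset.sum_congr rfl
          intro s _
          rw [hUind s]
          by_cases h : s ⊆ Tᶜ <;> simp [h]
      _ = (k.choose l : ℝ) - ∑ s ∈ Finset.powersetCard l (Finset.univ : Finset (Fin k)),
            (if s ⊆ Tᶜ then (1 : ℝ) else 0) := by
          rw [Finset.sum_sub_distrib]
          simp [Finset.card_powersetCard]
      _ = (k.choose l : ℝ) - ((k - m).choose l : ℝ) := by
          congr 1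
          rw [Finset.sum_boole]
          have hfil : (Finset.powersetCard l (Finset.univ : Finset (Fin k))).filter
              (fun s => s ⊆ Tᶜ) = Finset.powersetCard l Tᶜ := by
            ext s
            simp [Finset.mem_powersetCard, and_comm]
          rw [hfil]
          simp [Finset.card_powersetCard, hTc]
  rw [hLHS]
  -- RHS first sum
  have h1 : ∑ i ∈ Finset.range k, (Δ (k - i)).indicator (fun _ => (1 : ℝ)) ω
      = if 1 ≤ m then 1 else 0 := by
    rw [Finset.sum_congr rfl (fun i _ => hΔind (k - i))]
    rcases Nat.eq_zero_or_pos m with h0 | hpos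
    · simp only [h0]
      rw [Finset.sum_eq_zero]
      · simp [h0]
      intro i hi
      simp only [Finset.mem_range] at hi
      have : k - i ≠ 0 := by omega
      simp [Ne.symm this]
    · rw [Finset.sum_eq_single (k - m)]
      · have : m = k - (k - m) := by omega
        rw [if_pos this, if_pos (Nat.one_le_iff_ne_zero.mpr (Nat.pos_iff_ne_zero.mp hpos))]
      · intro i hi hne
        simp only [Finset.mem_range] at hi
        have : m ≠ k - i := by omega
        simp [this]
      · intro h
        simp only [Finset.mem_range, not_lt] at h
        omega
  -- RHS second sum
  have h2 : ∑ i ∈ Finset.Ico l k, (i.choose l : ℝ) * (Δ (k - i)).indicator (fun _ => (1 : ℝ)) ω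
      = if 1 ≤ m then ((k - m).choose l : ℝ) else 0 := by
    rw [Finset.sum_congr rfl (fun i _ => by rw [hΔind (k - i)])]
    rcases Nat.eq_zero_or_pos m with h0 | hpos
    · simp only [h0]
      rw [Finset.sum_eq_zero]
      · simp [h0]
      intro i hi
      simp only [Finset.mem_Ico] at hi
      have : (0 : ℕ) ≠ k - i := by omega
      simp [this]
    · by_cases hlm : l ≤ k - m
      · rw [Finset.sum_eq_single (k - m)]
        · have : m = k - (k - m) := by omega
          rw [if_pos this, if_pos (Nat.one_le_iff_ne_zero.mpr (Nat.pos_iff_ne_zero.mp hpos)), mul_one]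
        · intro i hi hne
          simp only [Finset.mem_Ico] at hi
          have : m ≠ k - i := by omega
          simp [this]
        · intro h
          simp only [Finset.mem_Ico, not_and_or, not_le, not_lt] at h
          omega
      · have hc : (k - m).choose l = 0 := Nat.choose_eq_zero_of_lt (by omega)
        rw [Finset.sum_eq_zero]
        · simp [hc, hpos]
        intro i hi
        simp only [Finset.mem_Ico] at hi
        have : m ≠ k - i := by omega
        simp [this]
  rw [h1, h2]
  rcases Nat.eq_zero_or_pos m with h0 | hpos
  · have : ¬ (1 ≤ m) := by omega
    simp [h0, this]
  · rw [if_pos (Nat.one_le_iff_ne_zero.mpr (Nat.pos_iff_ne_zero.mp hpos)), if_pos (Nat.one_le_iff_ne_zero.mpr (Nat.pos_iff_ne_zero.mp hpos)), mul_one]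
end

section
/- With notation as in the previous identity, for 2 ≤ l ≤ k and for every ω, the difference (1/C(k,l)) Σ_{|S|=l} 1_{∪_{i∈S} A_i}(ω) − (1/C(k,l−1)) Σ_{|S|=l−1} 1_{∪_{i∈S} A_i}(ω) is nonnegative; i.e., the pointwise averaged indicator of unions over l-subsets dominates that over (l−1)-subsets. -/
open Finset

lemma choose_ratio_mono (c k j : ℕ) (hck : c ≤ k) :
    c.choose (j+1) * k.choose j ≤ c.choose j * k.choose (j+1) := by
  have h1 : c.choose (j+1) * (j+1) = c.choose j * (c - j) := Nat.choose_succ_right_eq c j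
  have h2 : k.choose (j+1) * (j+1) = k.choose j * (k - j) := Nat.choose_succ_right_eq k j
  have key : c.choose (j+1) * k.choose j * (j+1) ≤ c.choose j * k.choose (j+1) * (j+1) := by
    calc c.choose (j+1) * k.choose j * (j+1)
        = (c.choose (j+1) * (j+1)) * k.choose j := by ring
      _ = c.choose j * (c - j) * k.choose j := by rw [h1]
      _ ≤ c.choose j * (k - j) * k.choose j := by
          exact Nat.mul_le_mul_right _ (Nat.mul_le_mul_left _ (Nat.sub_le_sub_right hck j))
      _ = c.choose j * (k.choose j * (k - j)) := by ring
      _ = c.choose j * (k.choose (j+1) * (j+1)) := by rw [h2]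
      _ = c.choose j * k.choose (j+1) * (j+1) := by ring
  exact Nat.le_of_mul_le_mul_right key (Nat.succ_pos j)

theorem avg_union_indicator_pointwise_monotone
    {Ω : Type*} (k : ℕ) (A : Fin k → Set Ω)
    (l : ℕ) (hl2 : 2 ≤ l) (hlk : l ≤ k) (ω : Ω) :
    0 ≤ (1 / (k.choose l : ℝ)) *
          ∑ s ∈ Finset.powersetCard l (Finset.univ : Finset (Fin k)),
            (⋃ i ∈ s, A i).indicator (fun _ => (1 : ℝ)) ω
        - (1 / (k.choose (l - 1) : ℝ)) *
          ∑ s ∈ Finset.powersetCard (l - 1) (Finset.univ : Finset (Fin k)),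
            (⋃ i ∈ s, A i).indicator (fun _ => (1 : ℝ)) ω := by
  classical
  set B : Finset (Fin k) := Finset.univ.filter (fun i => ω ∈ A i) with hB
  have hcardc : Bᶜ.card ≤ k := by
    simpa using Finset.card_le_card (Finset.subset_univ Bᶜ)
  set c := Bᶜ.card with hc
  have key : ∀ m : ℕ, ∑ s ∈ powersetCard m (univ : Finset (Fin k)),
      (⋃ i ∈ s, A i).indicator (fun _ => (1:ℝ)) ω
      = (k.choose m : ℝ) - (c.choose m : ℝ) := by
    intro m
    have hind : ∀ s : Finset (Fin k),
        (⋃ i ∈ s, A i).indicator (fun _ => (1:ℝ)) ω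
        = if s ⊆ Bᶜ then 0 else 1 := by
      intro s
      by_cases h : ω ∈ ⋃ i ∈ s, A i
      · rw [Set.indicator_of_mem h, if_neg]
        simp only [Set.mem_iUnion] at h
        obtain ⟨i, hi, hωi⟩ := h
        intro hsub
        have := hsub hi
        simp [hB] at this
        exact this hωi
      · rw [Set.indicator_of_notMem h, if_pos]
        intro i hi
        simp only [hB, Finset.mem_compl, Finset.mem_filter, Finset.mem_univ, true_and]
        intro hωi
        exact h (Set.mem_iUnion₂.mpr ⟨i, hi, hωi⟩)
    simp_rw [hind]
    rw [Finset.sum_ite]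
    simp only [Finset.sum_const_zero, Finset.sum_const, nsmul_eq_mul, mul_one, zero_add]
    have hcard1 : (powersetCard m (univ : Finset (Fin k))).filter (fun s => s ⊆ Bᶜ)
        = powersetCard m Bᶜ := by
      ext s
      simp only [Finset.mem_filter, Finset.mem_powersetCard, Finset.subset_univ, true_and]
      tauto
    have hsplit : ((powersetCard m (univ : Finset (Fin k))).filter (fun s => ¬ s ⊆ Bᶜ)).card
        = k.choose m - c.choose m := by
      have h := Finset.card_filter_add_card_filter_not
        (s := powersetCard m (univ : Finset (Fin k))) (p := fun s => s ⊆ Bᶜ)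
      rw [hcard1] at h
      simp only [Finset.card_powersetCard, Finset.card_univ, Fintype.card_fin] at h
      rw [← hc] at h
      omega
    rw [hsplit]
    have hle : c.choose m ≤ k.choose m := Nat.choose_le_choose m hcardc
    push_cast [Nat.cast_sub hle]
    ring
  rw [key l, key (l-1)]
  have hl1 : l - 1 + 1 = l := by omega
  have hpos1 : (0:ℝ) < k.choose l := by
    exact_mod_cast Nat.choose_pos hlk
  have hpos2 : (0:ℝ) < k.choose (l-1) := by
    exact_mod_cast Nat.choose_pos (by omega : l - 1 ≤ k)
  have hineq : (c.choose l : ℝ) * (k.choose (l-1) : ℝ)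
      ≤ (c.choose (l-1) : ℝ) * (k.choose l : ℝ) := by
    exact_mod_cast (by rw [← hl1]; exact choose_ratio_mono c k (l-1) hcardc :
      c.choose l * k.choose (l-1) ≤ c.choose (l-1) * k.choose l)
  have h1 : (c.choose l : ℝ) / (k.choose l : ℝ) ≤ (c.choose (l-1) : ℝ) / (k.choose (l-1) : ℝ) :=
    (div_le_div_iff₀ hpos1 hpos2).mpr hineq
  have e1 : (1 / (k.choose l : ℝ)) * ((k.choose l : ℝ) - (c.choose l : ℝ))
      = 1 - (c.choose l : ℝ) / (k.choose l : ℝ) := by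
    field_simp
  have e2 : (1 / (k.choose (l-1) : ℝ)) * ((k.choose (l-1) : ℝ) - (c.choose (l-1) : ℝ))
      = 1 - (c.choose (l-1) : ℝ) / (k.choose (l-1) : ℝ) := by
    field_simp
  rw [e1, e2]
  linarith
end

section
/- Let Φ be the standard normal cdf, δ > 0, σ > 0, n ≥ 1 fixed, and define B(λ₀) = Φ(√n·δ/(2σ) + a_n(1)) − Φ(√n·δ/(2σ) − a_n(1)) where a_n(1) = sqrt((1 + 1/(nλ₀²)) · log(nλ₀²+1)). Then B(λ₀) → 1 as λ₀ → ∞. -/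
open ProbabilityTheory Filter Real

noncomputable def stdNormalCDF : ℝ → ℝ := fun t => cdf (gaussianReal 0 1) t

theorem bias_in_favor_tendsto_one (n : ℕ) (hn : 1 ≤ n)
    (δ σ : ℝ) (hδ : 0 < δ) (hσ : 0 < σ)
    (a B : ℝ → ℝ)
    (ha : ∀ lam : ℝ, 0 < lam →
      a lam = Real.sqrt ((1 + 1 / (n * lam ^ 2)) * Real.log (n * lam ^ 2 + 1)))
    (hB : ∀ lam : ℝ, 0 < lam →
      B lam = stdNormalCDF (Real.sqrt n * δ / (2 * σ) + a lam)
            - stdNormalCDF (Real.sqrt n * δ / (2 * σ) - a lam)) :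
    Tendsto B atTop (nhds 1) := by
  have hn' : (1:ℝ) ≤ n := by exact_mod_cast hn
  set c := Real.sqrt n * δ / (2 * σ) with hc
  -- log (n * lam^2 + 1) → ∞
  have hlog : Tendsto (fun lam : ℝ => Real.log ((n:ℝ) * lam ^ 2 + 1)) atTop atTop := by
    apply Real.tendsto_log_atTop.comp
    apply tendsto_atTop_add_const_right
    exact Tendsto.const_mul_atTop (by linarith : (0:ℝ) < n)
      (tendsto_pow_atTop (by norm_num))
  have hsq : Tendsto (fun lam : ℝ => Real.sqrt (Real.log ((n:ℝ) * lam ^ 2 + 1)))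
      atTop atTop := by
    refine (tendsto_atTop_atTop_of_monotone (fun x y h => Real.sqrt_le_sqrt h) ?_).comp hlog
    intro b
    exact ⟨(max 0 b) ^ 2, by
      rw [Real.sqrt_sq (le_max_left 0 b)]; exact le_max_right 0 b⟩
  -- a → ∞
  have haT : Tendsto a atTop atTop := by
    apply tendsto_atTop_mono' atTop ?_ hsq
    filter_upwards [eventually_gt_atTop (0:ℝ)] with lam hlam
    rw [ha lam hlam]
    apply Real.sqrt_le_sqrt
    have h1 : (0:ℝ) < (n:ℝ) * lam ^ 2 := by positivity
    have h2 : (0:ℝ) ≤ Real.log ((n:ℝ) * lam ^ 2 + 1) :=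
      Real.log_nonneg (by linarith)
    nlinarith [div_nonneg (le_of_lt one_pos) h1.le,
      mul_nonneg (div_nonneg (le_of_lt one_pos) h1.le) h2]
  have h1 : Tendsto (fun lam => c + a lam) atTop atTop :=
    tendsto_atTop_add_const_left _ c haT
  have h2 : Tendsto (fun lam => c - a lam) atTop atBot := by
    apply tendsto_atBot_add_const_left _ c
    exact tendsto_neg_atTop_atBot.comp haT
  have hF : Tendsto (fun lam => stdNormalCDF (c + a lam) - stdNormalCDF (c - a lam))
      atTop (nhds (1 - 0)) := by
    exact ((tendsto_cdf_atTop (gaussianReal 0 1)).comp h1).sub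
      ((tendsto_cdf_atBot (gaussianReal 0 1)).comp h2)
  norm_num at hF
  apply hF.congr'
  filter_upwards [eventually_gt_atTop (0:ℝ)] with lam hlam
  exact (hB lam hlam).symm
end

section
/- In the setting of the previous statement, the event {RB(μ₀|x) ≤ q} for 0 < q with q² ≤ nλ₀²+1 is exactly the event {|x̄ − μ₀| ≥ (σ/√n)·a_n(q)} where a_n(q) = sqrt((1 + 1/(nλ₀²)) log((nλ₀²+1)/q²)). Consequently, when the true mean is μ₀ (so x̄ ~ N(μ₀, σ²/n)), the probability that RB(μ₀|x) ≤ q equals 2(1 − Φ(a_n(q))). -/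
open MeasureTheory ProbabilityTheory Real
open Set

lemma std_neg_map : (gaussianReal 0 1).map (fun z : ℝ => (-1) * z) = gaussianReal 0 1 := by
  rw [show (fun z : ℝ => (-1) * z) = ((-1 : ℝ) * ·) from rfl, gaussianReal_map_const_mul]
  congr 1
  · norm_num
  · ext; norm_num

instance : NullSingletonClass (gaussianReal 0 1) :=
  ⟨fun x => gaussianReal_absolutelyContinuous 0 one_ne_zero (measure_singleton x)⟩

lemma std_Iic_neg (a : ℝ) : gaussianReal 0 1 (Iic (-a)) = gaussianReal 0 1 (Ici a) := by
  conv_lhs => rw [← std_neg_map]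
  rw [Measure.map_apply (by fun_prop) measurableSet_Iic]
  congr 1
  ext z
  simp only [mem_preimage, mem_Iic, mem_Ici]
  constructor <;> intro h <;> linarith

lemma std_tail (a : ℝ) (ha : 0 ≤ a) :
    gaussianReal 0 1 {z : ℝ | a ≤ |z|} = ENNReal.ofReal (2 * (1 - stdNormalCDF a)) := by
  set μ := gaussianReal 0 1 with hμ
  have hset : {z : ℝ | a ≤ |z|} = Iic (-a) ∪ Ici a := by
    ext z
    simp only [mem_setOf_eq, mem_union, mem_Iic, mem_Ici, le_abs]
    constructor
    · rintro (h | h)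
      · right; exact h
      · left; linarith
    · rintro (h | h)
      · right; linarith
      · left; exact h
  have hinter : μ (Iic (-a) ∩ Ici a) = 0 := by
    refine measure_mono_null (fun x hx => ?_) (measure_singleton a)
    have h1 : x ≤ -a := hx.1
    have h2 : a ≤ x := hx.2
    have : x = a := le_antisymm (by linarith) h2
    simp [this]
  have key := measure_union_add_inter (μ := μ) (t := Ici a) (Iic (-a)) measurableSet_Ici
  rw [hinter, add_zero] at key
  have hIci : μ (Ici a) = μ (Ioi a) := (measure_congr (Ioi_ae_eq_Ici (μ := μ) (a := a))).symm
  have hcompl : μ (Ioi a) = 1 - μ (Iic a) := by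
    rw [← compl_Iic, prob_compl_eq_one_sub measurableSet_Iic]
  have hcdf : stdNormalCDF a = (μ (Iic a)).toReal := cdf_eq_real μ a
  have hle : μ (Iic a) ≤ 1 := prob_le_one
  have htr : (μ (Ioi a)).toReal = 1 - stdNormalCDF a := by
    rw [hcompl, ENNReal.toReal_sub_of_le hle ENNReal.one_ne_top, hcdf, ENNReal.toReal_one]
  have hne : μ (Ioi a) ≠ ⊤ := measure_ne_top μ _
  rw [hset, key, std_Iic_neg, hIci, ← htr, two_mul,
    ENNReal.ofReal_add ENNReal.toReal_nonneg ENNReal.toReal_nonneg,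
    ENNReal.ofReal_toReal hne]


theorem false_positive_prob_formula
    (n : ℕ) (hn : 1 ≤ n) (μ₀ σ lam q : ℝ) (hσ : 0 < σ) (hlam : 0 < lam)
    (hq : 0 < q) (hq2 : q ^ 2 ≤ n * lam ^ 2 + 1)
    (RB : ℝ → ℝ)
    (hRB : ∀ xbar, RB xbar = Real.sqrt (n * lam ^ 2 + 1) *
      Real.exp (-(n : ℝ) ^ 2 * lam ^ 2 * (xbar - μ₀) ^ 2
        / (2 * σ ^ 2 * (n * lam ^ 2 + 1))))
    (a : ℝ)
    (ha : a = Real.sqrt ((1 + 1 / (n * lam ^ 2)) * Real.log ((n * lam ^ 2 + 1) / q ^ 2))) :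
    {xbar | RB xbar ≤ q} = {xbar | σ / Real.sqrt n * a ≤ |xbar - μ₀|} ∧
      gaussianReal μ₀ (Real.toNNReal (σ ^ 2 / n)) {xbar | RB xbar ≤ q}
        = ENNReal.ofReal (2 * (1 - stdNormalCDF a)) := by
  have hn' : (1:ℝ) ≤ n := by exact_mod_cast hn
  have hn0 : (0:ℝ) < n := by linarith
  set S : ℝ := n * lam ^ 2 + 1 with hSdef
  have hnl : 0 < (n:ℝ) * lam ^ 2 := by positivity
  have hS : 0 < S := by positivity
  set L : ℝ := Real.log (S / q ^ 2) with hLdef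
  have hL : 0 ≤ L := Real.log_nonneg ((one_le_div (by positivity)).mpr hq2)
  have ha0 : 0 ≤ a := ha ▸ Real.sqrt_nonneg _
  have hc : 0 < σ / Real.sqrt n := by positivity
  have ha2 : a ^ 2 = (1 + 1 / (n * lam ^ 2)) * L := by
    rw [ha, sq_sqrt (by positivity)]
  set b : ℝ := σ / Real.sqrt n * a with hbdef
  have hb0 : 0 ≤ b := by positivity
  have hb2 : b ^ 2 = σ ^ 2 * S / (n ^ 2 * lam ^ 2) * L := by
    rw [hbdef, mul_pow, div_pow, Real.sq_sqrt hn0.le, ha2]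
    field_simp
    ring
  have hlogq : Real.log (q / Real.sqrt S) = -(L / 2) := by
    rw [hLdef, Real.log_div hq.ne' (Real.sqrt_pos.mpr hS).ne', Real.log_sqrt hS.le,
      Real.log_div hS.ne' (by positivity), Real.log_pow]
    push_cast
    ring
  have hiff : ∀ x : ℝ, RB x ≤ q ↔ b ≤ |x - μ₀| := by
    intro x
    rw [hRB, ← Real.sqrt_sq hb0, ← Real.sqrt_sq_eq_abs,
      Real.sqrt_le_sqrt_iff (sq_nonneg (x - μ₀)), hb2, mul_comm,
      ← le_div_iff₀ (Real.sqrt_pos.mpr hS), ← Real.le_log_iff_exp_le (by positivity), hlogq,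
      le_neg, show -(-(n:ℝ) ^ 2 * lam ^ 2 * (x - μ₀) ^ 2 / (2 * σ ^ 2 * S))
        = (n:ℝ) ^ 2 * lam ^ 2 * (x - μ₀) ^ 2 / (2 * σ ^ 2 * S) from by ring,
      div_le_div_iff₀ (by positivity : (0:ℝ) < 2) (by positivity : (0:ℝ) < 2 * σ ^ 2 * S),
      div_mul_eq_mul_div, div_le_iff₀ (by positivity : (0:ℝ) < (n:ℝ) ^ 2 * lam ^ 2)]
    constructor <;> intro h <;> nlinarith [hS, hnl, sq_nonneg (x - μ₀)]
  have hsets : {xbar | RB xbar ≤ q} = {xbar | σ / Real.sqrt n * a ≤ |xbar - μ₀|} := by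
    ext x; exact hiff x
  refine ⟨hsets, ?_⟩
  rw [hsets]
  have hms : MeasurableSet {x : ℝ | b ≤ |x - μ₀|} :=
    measurableSet_le measurable_const (by fun_prop)
  have hmap : gaussianReal μ₀ (Real.toNNReal (σ ^ 2 / n))
      = ((gaussianReal 0 1).map ((σ / Real.sqrt n) * ·)).map (· + μ₀) := by
    rw [gaussianReal_map_const_mul, gaussianReal_map_add_const]
    congr 1
    · simp
    · refine NNReal.coe_injective ?_
      push_cast
      rw [Real.coe_toNNReal _ (by positivity), div_pow, Real.sq_sqrt hn0.le, mul_one]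
  have hpre : ((σ / Real.sqrt n) * ·) ⁻¹' ((· + μ₀) ⁻¹' {x : ℝ | b ≤ |x - μ₀|})
      = {z : ℝ | a ≤ |z|} := by
    ext z
    simp only [mem_preimage, mem_setOf_eq, add_sub_cancel_right]
    rw [abs_mul, abs_of_pos hc, hbdef]
    exact mul_le_mul_iff_right₀ hc
  rw [hmap, Measure.map_apply (by fun_prop) hms,
    Measure.map_apply (by fun_prop) (hms.preimage (by fun_prop)), hpre]
  exact std_tail a ha0
end

section
/- Let x̄ ∈ ℝ, μ₀ ∈ ℝ, σ, λ₀ > 0, n ≥ 1, and define f(μ) = −n(x̄ − μ)²/(2σ²) − √2|μ − μ₀|/(λ₀σ). Then f attains its unique maximum at μ_MAP = x̄ + √2σ/(λ₀n) if x̄ < μ₀ − √2σ/(λ₀n); at μ_MAP = μ₀ if |x̄ − μ₀| ≤ √2σ/(λ₀n); and at μ_MAP = x̄ − √2σ/(λ₀n) if x̄ > μ₀ + √2σ/(λ₀n). -/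
open Real

theorem laplace_map_soft_thresholding
    (n : ℕ) (hn : 1 ≤ n) (xbar μ₀ σ lam : ℝ) (hσ : 0 < σ) (hlam : 0 < lam)
    (f : ℝ → ℝ)
    (hf : ∀ μ, f μ = -(n : ℝ) * (xbar - μ) ^ 2 / (2 * σ ^ 2)
        - Real.sqrt 2 * |μ - μ₀| / (lam * σ))
    (t : ℝ) (ht : t = Real.sqrt 2 * σ / (lam * n)) :
    (xbar < μ₀ - t → ∀ μ : ℝ, μ ≠ xbar + t → f μ < f (xbar + t)) ∧
      (|xbar - μ₀| ≤ t → ∀ μ : ℝ, μ ≠ μ₀ → f μ < f μ₀) ∧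
      (μ₀ + t < xbar → ∀ μ : ℝ, μ ≠ xbar - t → f μ < f (xbar - t)) := by
  have hs0 : (0:ℝ) < Real.sqrt 2 := Real.sqrt_pos.mpr (by norm_num)
  have hn0 : (0:ℝ) < n := by exact_mod_cast Nat.lt_of_lt_of_le Nat.zero_lt_one hn
  set s := Real.sqrt 2 with hsdef
  set c := (n:ℝ) / (2 * σ ^ 2) with hcdef
  set b := s / (lam * σ) with hbdef
  have hc : 0 < c := by positivity
  have hb : 0 < b := by positivity
  have hbt : b = 2 * c * t := by
    rw [hbdef, hcdef, ht]
    field_simp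
  have ht0 : 0 < t := by
    rw [ht]; positivity
  have hfg : ∀ μ, f μ = -c * (xbar - μ) ^ 2 - b * |μ - μ₀| := by
    intro μ
    rw [hf, hcdef, hbdef]
    field_simp
  refine ⟨?_, ?_, ?_⟩
  · intro h μ hμ
    rw [hfg, hfg]
    have hne : μ - (xbar + t) ≠ 0 := sub_ne_zero.mpr hμ
    have hsq : 0 < (μ - (xbar + t)) ^ 2 := by positivity
    have habs : |xbar + t - μ₀| = -(xbar + t - μ₀) := abs_of_neg (by linarith)
    rw [habs]
    rcases abs_cases (μ - μ₀) with ⟨h1, h2⟩ | ⟨h1, h2⟩ <;> rw [h1]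
    · nlinarith [mul_pos hc hsq, mul_nonneg hb.le h2]
    · nlinarith [mul_pos hc hsq]
  · intro h μ hμ
    rw [hfg, hfg]
    have hne : μ - μ₀ ≠ 0 := sub_ne_zero.mpr hμ
    have hsq : 0 < (μ - μ₀) ^ 2 := by positivity
    have hkey : 2 * c * |xbar - μ₀| ≤ b := by
      rw [hbt]
      nlinarith [abs_nonneg (xbar - μ₀)]
    have h5 : (xbar - μ₀) * (μ - μ₀) ≤ |xbar - μ₀| * |μ - μ₀| := by
      rw [← abs_mul]; exact le_abs_self _
    have h6 : 2 * c * |xbar - μ₀| * |μ - μ₀| ≤ b * |μ - μ₀| :=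
      mul_le_mul_of_nonneg_right hkey (abs_nonneg _)
    have h7 : 2 * c * ((xbar - μ₀) * (μ - μ₀)) ≤ 2 * c * (|xbar - μ₀| * |μ - μ₀|) :=
      mul_le_mul_of_nonneg_left h5 (by positivity)
    simp only [sub_self, abs_zero]
    nlinarith [mul_pos hc hsq, sq_abs (μ - μ₀), mul_pos hc (pow_pos (abs_pos.mpr hne) 2)]
  · intro h μ hμ
    rw [hfg, hfg]
    have hne : μ - (xbar - t) ≠ 0 := sub_ne_zero.mpr hμ
    have hsq : 0 < (μ - (xbar - t)) ^ 2 := by positivity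
    have habs : |xbar - t - μ₀| = xbar - t - μ₀ := abs_of_pos (by linarith)
    rw [habs]
    rcases abs_cases (μ - μ₀) with ⟨h1, h2⟩ | ⟨h1, h2⟩ <;> rw [h1]
    · nlinarith [mul_pos hc hsq]
    · nlinarith [mul_pos hc hsq, mul_nonneg hb.le (by linarith : (0:ℝ) ≤ μ₀ - μ)]
end

section
/- Let x̄ ~ N(μ₀, σ²/n). With μ_MAP as defined by the soft-thresholding rule above, P(μ_MAP = μ₀) = 2Φ(√2/(λ₀√n)) − 1, where Φ is the standard normal cdf. Moreover this probability converges to 0 as n → ∞ and as λ₀ → ∞. -/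
open MeasureTheory ProbabilityTheory Filter Real

lemma stdNormal_singleton (x : ℝ) : gaussianReal 0 1 {x} = 0 :=
  gaussianReal_absolutelyContinuous 0 one_ne_zero (measure_singleton x)

instance : MeasureTheory.NullSingletonClass (gaussianReal 0 1) := ⟨stdNormal_singleton⟩

lemma stdNormal_map_neg : (gaussianReal 0 1).map (fun x : ℝ => (-1) * x) = gaussianReal 0 1 := by
  rw [show (fun x : ℝ => (-1 : ℝ) * x) = ((-1 : ℝ) * ·) from rfl, gaussianReal_map_const_mul]
  norm_num

lemma stdNormalCDF_neg (a : ℝ) : stdNormalCDF (-a) = 1 - stdNormalCDF a := by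
  have h1 : gaussianReal 0 1 (Set.Iic (-a)) = gaussianReal 0 1 (Set.Ici a) := by
    conv_lhs => rw [← stdNormal_map_neg]
    rw [Measure.map_apply (by fun_prop) measurableSet_Iic]
    congr 1
    ext x
    simp only [Set.mem_preimage, Set.mem_Iic, Set.mem_Ici]
    constructor <;> intro h <;> nlinarith
  have h2 : gaussianReal 0 1 (Set.Ici a) = 1 - gaussianReal 0 1 (Set.Iic a) := by
    rw [show Set.Ici a = (Set.Iio a)ᶜ by simp, prob_compl_eq_one_sub measurableSet_Iio,
      measure_congr (Iio_ae_eq_Iic (a := a))]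
  have hle : gaussianReal 0 1 (Set.Iic a) ≤ 1 := prob_le_one
  simp only [stdNormalCDF, cdf_eq_real, measureReal_def, h1, h2]
  rw [ENNReal.toReal_sub_of_le hle ENNReal.one_ne_top]
  simp

lemma stdNormalCDF_zero : stdNormalCDF 0 = 1 / 2 := by
  have := stdNormalCDF_neg 0
  rw [neg_zero] at this
  linarith

lemma stdNormalCDF_continuousAt (x : ℝ) : ContinuousAt stdNormalCDF x := by
  have hm : Monotone stdNormalCDF := monotone_cdf (gaussianReal 0 1)
  rw [hm.continuousAt_iff_leftLim_eq_rightLim]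
  have hr : Function.rightLim stdNormalCDF x = stdNormalCDF x :=
    (cdf (gaussianReal 0 1)).rightLim_eq x
  rw [hr]
  have h := (cdf (gaussianReal 0 1)).measure_singleton x
  rw [measure_cdf, stdNormal_singleton x] at h
  have h0 : stdNormalCDF x - Function.leftLim stdNormalCDF x ≤ 0 :=
    ENNReal.ofReal_eq_zero.mp h.symm
  have hle : Function.leftLim stdNormalCDF x ≤ stdNormalCDF x := hm.leftLim_le le_rfl
  linarith

theorem laplace_map_sparsity_prob
    (n : ℕ) (hn : 1 ≤ n) (μ₀ σ lam : ℝ) (hσ : 0 < σ) (hlam : 0 < lam)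
    (t : ℝ) (ht : t = Real.sqrt 2 * σ / (lam * n))
    (μMAP : ℝ → ℝ)
    (hμMAP : ∀ xbar, μMAP xbar =
      if xbar < μ₀ - t then xbar + t
      else if xbar ≤ μ₀ + t then μ₀
      else xbar - t) :
    gaussianReal μ₀ (Real.toNNReal (σ ^ 2 / n)) {xbar | μMAP xbar = μ₀}
        = ENNReal.ofReal (2 * stdNormalCDF (Real.sqrt 2 / (lam * Real.sqrt n)) - 1) ∧
      Tendsto (fun m : ℕ => 2 * stdNormalCDF (Real.sqrt 2 / (lam * Real.sqrt m)) - 1)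
        atTop (nhds 0) ∧
      Tendsto (fun l : ℝ => 2 * stdNormalCDF (Real.sqrt 2 / (l * Real.sqrt n)) - 1)
        atTop (nhds 0) := by
  have hn0 : (0 : ℝ) < n := by exact_mod_cast Nat.lt_of_lt_of_le Nat.zero_lt_one hn
  have hsqn : (0 : ℝ) < Real.sqrt n := Real.sqrt_pos.mpr hn0
  set s : ℝ := σ / Real.sqrt n with hs_def
  have hs : 0 < s := div_pos hσ hsqn
  set a : ℝ := Real.sqrt 2 / (lam * Real.sqrt n) with ha_def
  have hsq2 : (0 : ℝ) < Real.sqrt 2 := Real.sqrt_pos.mpr (by norm_num)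
  have ha : 0 < a := div_pos hsq2 (mul_pos hlam hsqn)
  have hnn : Real.sqrt n * Real.sqrt n = n := Real.mul_self_sqrt hn0.le
  have ht' : t = s * a := by
    rw [ht, hs_def, ha_def]
    field_simp
    ring_nf
    rw [Real.sq_sqrt hn0.le]
  constructor
  · -- measure computation
    have hset : {xbar | μMAP xbar = μ₀} = Set.Icc (μ₀ - t) (μ₀ + t) := by
      have ht0 : 0 < t := by rw [ht']; positivity
      ext x
      simp only [Set.mem_setOf_eq, hμMAP, Set.mem_Icc]
      split_ifs with h1 h2
      · constructor
        · intro h; exfalso; linarith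
        · intro ⟨h, _⟩; exfalso; linarith
      · push_neg at h1
        constructor
        · intro _; exact ⟨by linarith, h2⟩
        · intro _; rfl
      · push_neg at h1 h2
        constructor
        · intro h; exfalso; linarith
        · intro ⟨_, h⟩; exfalso; linarith
    rw [hset]
    have hv : (Real.toNNReal (σ ^ 2 / n)) ≠ 0 := by
      simp only [ne_eq, Real.toNNReal_eq_zero, not_le]
      positivity
    have hvar : (⟨s ^ 2, sq_nonneg s⟩ : NNReal) * 1 = Real.toNNReal (σ ^ 2 / n) := by
      have hseq : s ^ 2 = σ ^ 2 / ↑n := by rw [hs_def, div_pow, Real.sq_sqrt hn0.le]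
      rw [mul_one, Real.toNNReal_of_nonneg (by positivity : (0:ℝ) ≤ σ ^ 2 / ↑n)]
      exact Subtype.ext hseq
    have hmap : (gaussianReal 0 1).map (fun x : ℝ => s * x + μ₀)
        = gaussianReal μ₀ (Real.toNNReal (σ ^ 2 / n)) := by
      have h1 : (fun x : ℝ => s * x + μ₀) = (· + μ₀) ∘ (s * ·) := rfl
      rw [h1, ← Measure.map_map (by fun_prop) (by fun_prop),
        gaussianReal_map_const_mul, gaussianReal_map_add_const]
      rw [← hvar]
      norm_num
      rfl
    rw [← hmap, Measure.map_apply (by fun_prop) measurableSet_Icc]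
    have hpre : (fun x : ℝ => s * x + μ₀) ⁻¹' Set.Icc (μ₀ - t) (μ₀ + t)
        = Set.Icc (-a) a := by
      ext x
      simp only [Set.mem_preimage, Set.mem_Icc]
      constructor
      · rintro ⟨h1, h2⟩
        constructor <;> nlinarith
      · rintro ⟨h1, h2⟩
        constructor <;> nlinarith [mul_le_mul_of_nonneg_left h1 hs.le,
          mul_le_mul_of_nonneg_left h2 hs.le]
    rw [hpre]
    have hIccIoc : gaussianReal 0 1 (Set.Icc (-a) a) = gaussianReal 0 1 (Set.Ioc (-a) a) :=
      (measure_congr (Ioc_ae_eq_Icc (a := -a) (b := a))).symm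
    rw [hIccIoc, show Set.Ioc (-a) a = Set.Iic a \ Set.Iic (-a) by rw [Set.Iic_sdiff_Iic],
      measure_diff (Set.Iic_subset_Iic.mpr (by linarith)) measurableSet_Iic.nullMeasurableSet
        (measure_ne_top _ _)]
    rw [← ofReal_cdf, ← ofReal_cdf]
    rw [show (2 : ℝ) * stdNormalCDF a - 1 = stdNormalCDF a - stdNormalCDF (-a) by
      rw [stdNormalCDF_neg]; ring]
    rw [ENNReal.ofReal_sub (stdNormalCDF a)
      (show (0:ℝ) ≤ stdNormalCDF (-a) from cdf_nonneg _ _)]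
    rfl
  · have hval : (2 : ℝ) * stdNormalCDF 0 - 1 = 0 := by rw [stdNormalCDF_zero]; ring
    have hcont : ContinuousAt (fun y : ℝ => 2 * stdNormalCDF y - 1) 0 :=
      (continuousAt_const.mul (stdNormalCDF_continuousAt 0)).sub continuousAt_const
    constructor
    · have hb : Tendsto (fun m : ℕ => Real.sqrt 2 / (lam * Real.sqrt m)) atTop (nhds 0) := by
        apply Tendsto.div_atTop tendsto_const_nhds
        have hsqrt : Tendsto Real.sqrt atTop atTop := by
          rw [tendsto_atTop_atTop]
          intro b
          refine ⟨b ^ 2, fun x hx => ?_⟩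
          calc b ≤ |b| := le_abs_self b
            _ = Real.sqrt (b ^ 2) := (Real.sqrt_sq_eq_abs b).symm
            _ ≤ Real.sqrt x := Real.sqrt_le_sqrt hx
        exact Tendsto.const_mul_atTop hlam (hsqrt.comp tendsto_natCast_atTop_atTop)
      have := hcont.tendsto.comp hb
      rwa [hval] at this
    · have hb : Tendsto (fun l : ℝ => Real.sqrt 2 / (l * Real.sqrt n)) atTop (nhds 0) := by
        apply Tendsto.div_atTop tendsto_const_nhds
        exact Tendsto.atTop_mul_const hsqn tendsto_id
      have := hcont.tendsto.comp hb
      rwa [hval] at this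
end
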